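/- arXiv:2212.12854 — 2 statements merged into one kernel-verified Lean document; each statement's English description precedes it below -/
import Mathlib

section
/- Monotonicity of penalized GBSDE solutions: Let f : Ω×[0,T]×ℝ → [0,∞) be nonnegative with y ↦ f(t,y) nonincreasing, and for each n ∈ ℕ let (Y^n,Z^n) be a solution to the GBSDE Y^n_t = ξ_T − ∫_{(t,T]} Z^n_s dM_s + ∫_{(t,T]} n·f(s,Y^n_s) dA_s. Then for every n ∈ ℕ, P(Y^{n+1}_t ≥ Y^n_t for all t ∈ [0,T]) = 1. -/
open MeasureTheory Set Filter Function
open scoped ENNReal NNReal Topology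

noncomputable section

namespace GBSDE

variable {Ω : Type*} {E : Type*}

open Classical in
/-- The Lebesgue–Stieltjes measure generated by a path `f : ℝ → ℝ`; junk value `0`
if the path is not nondecreasing and right-continuous. -/
noncomputable def lsMeasure (f : ℝ → ℝ) : Measure ℝ :=
  if h : Monotone f ∧ ∀ x, ContinuousWithinAt f (Set.Ici x) x
    then (⟨f, h.1, h.2⟩ : StieltjesFunction ℝ).measure else 0

/-- A real function has left limits everywhere. -/
def HasLeftLimits (f : ℝ → ℝ) : Prop := ∀ x : ℝ, ∃ l, Tendsto f (𝓝[<] x) (𝓝 l)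

/-- A real function has right limits everywhere. -/
def HasRightLimits (f : ℝ → ℝ) : Prop := ∀ x : ℝ, ∃ l, Tendsto f (𝓝[>] x) (𝓝 l)

/-- A real function is càdlàg: right-continuous with left limits. -/
def Cadlag (f : ℝ → ℝ) : Prop :=
  (∀ x, ContinuousWithinAt f (Set.Ici x) x) ∧ HasLeftLimits f

/-- A real function is làdlàg: it has left and right limits everywhere. -/
def Ladlag (f : ℝ → ℝ) : Prop := HasLeftLimits f ∧ HasRightLimits f

variable {m0 : MeasurableSpace Ω}

/-- The driver `A`: an adapted, continuous, nondecreasing process starting from `0`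
which is square-integrable at the horizon `T`. -/
structure IsDriver (T : ℝ) (𝓕 : Filtration ℝ m0) (P : Measure Ω) (A : ℝ → Ω → ℝ) : Prop where
  adapted : StronglyAdapted 𝓕 A
  mono : ∀ ω, Monotone fun t => A t ω
  cont : ∀ ω, Continuous fun t => A t ω
  zero : ∀ ω, A 0 ω = 0
  sq_int : (∫⁻ ω, (ENNReal.ofReal (A T ω)) ^ 2 ∂P) < ∞

/-- The squared `S²(𝔽)` (semi)norm of a process: `E[sup_{t ∈ [0,T]} |X_t|²]`. -/
def sqS2 (T : ℝ) (P : Measure Ω) (X : ℝ → Ω → ℝ) : ℝ≥0∞ :=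
  ∫⁻ ω, ⨆ t : Set.Icc (0:ℝ) T, ((‖X t ω‖₊ : ℝ≥0∞)) ^ 2 ∂P

def MemS2 (T : ℝ) (P : Measure Ω) (X : ℝ → Ω → ℝ) : Prop := sqS2 T P X < ∞

variable [NormedAddCommGroup E] [NormedSpace ℝ E] [CompleteSpace E]

/-- The squared `H²(M)` (semi)norm of a process: `E[∫_{(0,T]} |Z_s|² d[M]_s]`, where the
quadratic variation `[M]` is recorded through the process `QV`. -/
def sqH2 (T : ℝ) (P : Measure Ω) (QV : ℝ → Ω → ℝ) (Z : ℝ → Ω → E) : ℝ≥0∞ :=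
  ∫⁻ ω, ∫⁻ s in Set.Ioc (0:ℝ) T, ((‖Z s ω‖₊ : ℝ≥0∞)) ^ 2 ∂(lsMeasure fun u => QV u ω) ∂P

def MemH2 (T : ℝ) (P : Measure Ω) (QV : ℝ → Ω → ℝ) (Z : ℝ → Ω → E) : Prop :=
  sqH2 T P QV Z < ∞

/-- An abstract Itô stochastic-integration context for a square-integrable martingale `M`
possessing the predictable representation property: it records the martingale `M`, its
quadratic (co)variation process `QV = [M]`, and the stochastic integral operator
`int Z = ∫ Z dM` together with its basic properties (martingale property, Itô isometry,
linearity and the predictable representation property). -/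
structure ItoCalculus (E : Type*) [NormedAddCommGroup E] [NormedSpace ℝ E] [CompleteSpace E]
    {Ω : Type*} {m0 : MeasurableSpace Ω}
    (T : ℝ) (𝓕 : Filtration ℝ m0) (P : Measure Ω) where
  M : ℝ → Ω → E
  martM : Martingale M 𝓕 P
  sqIntM : ∀ t, MemLp (M t) 2 P
  QV : ℝ → Ω → ℝ
  qv_adapted : StronglyAdapted 𝓕 QV
  qv_mono : ∀ ω, Monotone fun t => QV t ω
  qv_rc : ∀ ω, ∀ x, ContinuousWithinAt (fun t => QV t ω) (Set.Ici x) x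
  qv_zero : ∀ ω, QV 0 ω = 0
  qv_int : (∫⁻ ω, ENNReal.ofReal (QV T ω) ∂P) < ∞
  int : (ℝ → Ω → E) → ℝ → Ω → ℝ
  int_zero : ∀ Z ω, int Z 0 ω = 0
  int_martingale : ∀ Z, ProgMeasurable 𝓕 Z → MemH2 T P QV Z → Martingale (int Z) 𝓕 P
  int_isometry : ∀ Z, ProgMeasurable 𝓕 Z → MemH2 T P QV Z → ∀ t ∈ Set.Icc (0:ℝ) T,
    (∫⁻ ω, ENNReal.ofReal ((int Z t ω) ^ 2) ∂P)
      = ∫⁻ ω, ∫⁻ s in Set.Ioc (0:ℝ) t, ((‖Z s ω‖₊ : ℝ≥0∞)) ^ 2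
          ∂(lsMeasure fun u => QV u ω) ∂P
  int_add : ∀ Z Z' : ℝ → Ω → E, ProgMeasurable 𝓕 Z → MemH2 T P QV Z →
    ProgMeasurable 𝓕 Z' → MemH2 T P QV Z' → ∀ t : ℝ,
    (fun ω => int (fun s ω' => Z s ω' + Z' s ω') t ω) =ᵐ[P] fun ω => int Z t ω + int Z' t ω
  int_smul : ∀ (c : ℝ) (Z : ℝ → Ω → E), ∀ t : ℝ,
    (fun ω => int (fun s ω' => c • Z s ω') t ω) =ᵐ[P] fun ω => c * int Z t ω
  prp : ∀ X : ℝ → Ω → ℝ, Martingale X 𝓕 P → (∀ t, MemLp (X t) 2 P) →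
    ∃ Z : ℝ → Ω → E, ProgMeasurable 𝓕 Z ∧ MemH2 T P QV Z ∧
      ∀ t ∈ Set.Icc (0:ℝ) T, X t =ᵐ[P] fun ω => X 0 ω + int Z t ω

variable {T : ℝ} {𝓕 : Filtration ℝ m0} {P : Measure Ω}

/-- Standing assumptions on the generator `g = g(t, y, ω)`: predictable dependence on
`(t, ω)`, square-integrability of `g(·, 0)` against `dA`, and Lipschitz continuity in `y`
with constant `L`. -/
structure StandingGenerator (T : ℝ) (𝓕 : Filtration ℝ m0) (P : Measure Ω)
    (A : ℝ → Ω → ℝ) (g : ℝ → ℝ → Ω → ℝ) (L : ℝ) : Prop where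
  meas : ∀ y : ℝ, ProgMeasurable 𝓕 fun t ω => g t y ω
  sq_int : (∫⁻ ω, ∫⁻ t in Set.Ioc (0:ℝ) T, ENNReal.ofReal ((g t 0 ω) ^ 2)
    ∂(lsMeasure fun u => A u ω) ∂P) < ∞
  lipschitz : ∀ t ω y y', |g t y ω - g t y' ω| ≤ L * |y - y'|

/-- `(Y, Z)` is a solution of the generalized BSDE with data `(M, A, g, ξ)`; the process
`SC.int Z` plays the role of the Itô integral `∫ Z dM`. -/
def IsGBSDESolution (SC : ItoCalculus E T 𝓕 P) (A : ℝ → Ω → ℝ)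
    (g : ℝ → ℝ → Ω → ℝ) (ξ : Ω → ℝ) (Y : ℝ → Ω → ℝ) (Z : ℝ → Ω → E) : Prop :=
  StronglyAdapted 𝓕 Y ∧ (∀ ω, Cadlag fun t => Y t ω) ∧ ProgMeasurable 𝓕 Z ∧
  Martingale (SC.int Z) 𝓕 P ∧
  (∀ ω, IntegrableOn (fun s => g s (Y s ω) ω) (Set.Ioc 0 T) (lsMeasure fun u => A u ω)) ∧
  ∀ᵐ ω ∂P, ∀ t ∈ Set.Icc (0:ℝ) T,
    Y t ω = ξ ω - (SC.int Z T ω - SC.int Z t ω)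
      + ∫ s in Set.Ioc t T, g s (Y s ω) ω ∂(lsMeasure fun u => A u ω)

/-- The right support `S^r(A)(ω)` of the (pathwise) measure generated by `A`. -/
def rightSupport (A : ℝ → Ω → ℝ) (ω : Ω) : Set ℝ :=
  {t : ℝ | ∀ ε > 0, A t ω < A (t + ε) ω}

/-- `V` is the essential supremum of the family `f i`, `i : ι`, under `P`. -/
def IsEssSup {ι : Sort*} (P : Measure Ω) (f : ι → Ω → ℝ) (V : Ω → ℝ) : Prop :=
  (∀ i, f i ≤ᵐ[P] V) ∧ ∀ U : Ω → ℝ, (∀ i, f i ≤ᵐ[P] U) → V ≤ᵐ[P] U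

/-- `V` is the essential infimum of the family `f i`, `i : ι`, under `P`. -/
def IsEssInf {ι : Sort*} (P : Measure Ω) (f : ι → Ω → ℝ) (V : Ω → ℝ) : Prop :=
  (∀ i, V ≤ᵐ[P] f i) ∧ ∀ U : Ω → ℝ, (∀ i, U ≤ᵐ[P] f i) → U ≤ᵐ[P] V

/-- Inequality `X ≤ Y` between optional processes: `X_τ ≤ Y_τ` a.s. for every
`𝔽`-stopping time `τ` with values in `[0, T]`. -/
def ProcLE (T : ℝ) (𝓕 : Filtration ℝ m0) (P : Measure Ω) (X Y : ℝ → Ω → ℝ) : Prop :=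
  ∀ τ : Ω → ℝ, IsStoppingTime 𝓕 (fun ω => (τ ω : WithTop ℝ)) → (∀ ω, τ ω ∈ Set.Icc 0 T) →
    (fun ω => X (τ ω) ω) ≤ᵐ[P] fun ω => Y (τ ω) ω

/-- The left-upper-semicontinuous envelope `ζ̄_t = limsup_{s↑t} ζ_s` of a path. -/
def luscEnvelope (f : ℝ → ℝ) (t : ℝ) : ℝ := limsup f (𝓝[<] t)

/-- `(Y, Z, K)` is a solution of the reflected generalized BSDE with data `(M, A, g, ζ)`:
the equation holds at every stopping time, `Y` dominates the obstacle `ζ`, and the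
nondecreasing làdlàg predictable process `K = K^c + K^d + K^g` satisfies the Skorokhod
conditions. -/
structure IsRGBSDESolution (SC : ItoCalculus E T 𝓕 P) (A : ℝ → Ω → ℝ)
    (g : ℝ → ℝ → Ω → ℝ) (ζ : ℝ → Ω → ℝ)
    (Y : ℝ → Ω → ℝ) (Z : ℝ → Ω → E) (K : ℝ → Ω → ℝ) : Prop where
  adaptedY : StronglyAdapted 𝓕 Y
  ladlagY : ∀ ω, Ladlag fun t => Y t ω
  progZ : ProgMeasurable 𝓕 Z
  progK : ProgMeasurable 𝓕 K
  monoK : ∀ ω, Monotone fun t => K t ω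
  ladlagK : ∀ ω, Ladlag fun t => K t ω
  zeroK : ∀ ω, K 0 ω = 0
  martN : Martingale (SC.int Z) 𝓕 P
  intg : ∀ ω, IntegrableOn (fun s => g s (Y s ω) ω) (Set.Ioc 0 T) (lsMeasure fun u => A u ω)
  eqn : ∀ τ : Ω → ℝ, IsStoppingTime 𝓕 (fun ω => (τ ω : WithTop ℝ)) → (∀ ω, τ ω ∈ Set.Icc 0 T) →
    ∀ᵐ ω ∂P, Y (τ ω) ω = ζ T ω - (SC.int Z T ω - SC.int Z (τ ω) ω)
      + (∫ s in Set.Ioc (τ ω) T, g s (Y s ω) ω ∂(lsMeasure fun u => A u ω))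
      + (K T ω - K (τ ω) ω)
  dominates : ∀ᵐ ω ∂P, ∀ t ∈ Set.Icc (0:ℝ) T, ζ t ω ≤ Y t ω
  skorokhod : ∃ Kc Kd Kg : ℝ → Ω → ℝ,
    (∀ ω t, K t ω = Kc t ω + Kd t ω + Kg t ω) ∧
    (∀ ω, Continuous fun t => Kc t ω) ∧ (∀ ω, Monotone fun t => Kc t ω) ∧
    (∀ ω, Monotone fun t => Kd t ω) ∧
    (∀ ω, ∀ x, ContinuousWithinAt (fun t => Kd t ω) (Set.Ici x) x) ∧
    (∀ ω, Monotone fun t => Kg t ω) ∧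
    (∀ ω, ∀ x, ContinuousWithinAt (fun t => Kg t ω) (Set.Iic x) x) ∧
    (∀ ω, Kc 0 ω = 0 ∧ Kd 0 ω = 0 ∧ Kg 0 ω = 0) ∧
    (∀ᵐ ω ∂P,
      (lsMeasure (fun t => Kc t ω)) {s : ℝ | s ∈ Set.Ioc (0:ℝ) T ∧
        luscEnvelope (fun u => ζ u ω) s < Function.leftLim (fun u => Y u ω) s} = 0 ∧
      (∀ t ∈ Set.Ioc (0:ℝ) T,
        (Function.leftLim (fun u => Y u ω) t - luscEnvelope (fun u => ζ u ω) t)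
          * (Kd t ω - Function.leftLim (fun u => Kd u ω) t) = 0) ∧
      (∀ t ∈ Set.Ico (0:ℝ) T,
        (Y t ω - ζ t ω) * (Function.rightLim (fun u => Kg u ω) t - Kg t ω) = 0))

/-- A predictable (announceable) stopping time. -/
def IsPredictableTime (𝓕 : Filtration ℝ m0) (τ : Ω → ℝ) : Prop :=
  IsStoppingTime 𝓕 (fun ω => (τ ω : WithTop ℝ)) ∧ ∃ σ : ℕ → Ω → ℝ,
    (∀ n, IsStoppingTime 𝓕 (fun ω => (σ n ω : WithTop ℝ))) ∧ (∀ ω, Monotone fun n => σ n ω) ∧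
    (∀ n ω, 0 < τ ω → σ n ω < τ ω) ∧ ∀ ω, Tendsto (fun n => σ n ω) atTop (𝓝 (τ ω))

/-- Quasi-left-continuity of the filtration: no (càdlàg) `𝔽`-martingale jumps at a
predictable stopping time. -/
def QuasiLeftContinuous (𝓕 : Filtration ℝ m0) (P : Measure Ω) : Prop :=
  ∀ X : ℝ → Ω → ℝ, Martingale X 𝓕 P → (∀ ω, Cadlag fun t => X t ω) →
    ∀ τ : Ω → ℝ, IsPredictableTime 𝓕 τ →
      ∀ᵐ ω ∂P, Function.leftLim (fun t => X t ω) (τ ω) = X (τ ω) ω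

end GBSDE

/-!
Put `δ = Y^{n+1} - Y^n`. Subtracting the two equations, `δ_u - δ_t` is a martingale increment
minus the drift `∫_{(t,u]} ((n+1) f(Y^{n+1}) - n f(Y^n)) dA`, and this drift is nonnegative
wherever `δ < 0`, because `f ≥ 0` is nonincreasing in `y`. Suppose `δ_t < c < 0` on an event
`B ∈ 𝓕_t` and let `τ` be the first time after `t` at which `δ > c` (or `T`, where `δ = 0`).
On `B` the martingale increment between `t` and `τ` is at least `c - δ_t > 0`, while optional
sampling makes its integral over `B` vanish; hence `P(B) = 0`. The filtration is not assumed
right-continuous, so `τ` is only an optional time: it is approximated from above by grid-valued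
stopping times, whose stopped values are uniformly integrable, and right-continuity of the paths
carries the identity to the limit. Right-continuity also passes from fixed times to all times.
-/

namespace MeasureTheory

theorem UniformIntegrable.tendsto_setIntegral_of_ae_tendsto {α G : Type*}
    [NormedAddCommGroup G] [NormedSpace ℝ G] [CompleteSpace G] {m : MeasurableSpace α}
    {μ : Measure α} [IsFiniteMeasure μ] {f : ℕ → α → G} {g : α → G}
    (hUI : UniformIntegrable f 1 μ) (hfg : ∀ᵐ x ∂μ, Tendsto (fun n => f n x) atTop (𝓝 (g x)))
    (s : Set α) :
    Tendsto (fun n => ∫ x in s, f n x ∂μ) atTop (𝓝 (∫ x in s, g x ∂μ)) := by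
  have hg : MemLp g 1 μ := hUI.memLp_of_ae_tendsto hfg
  exact tendsto_setIntegral_of_L1' g hg.1
    (Eventually.of_forall fun n => memLp_one_iff_integrable.1 (hUI.memLp n))
    (tendsto_Lp_finite_of_tendsto_ae le_rfl ENNReal.one_ne_top hUI.1 hg hUI.2.1 hfg) s

namespace Martingale

variable {Ω ι : Type*} {m : MeasurableSpace Ω} {μ : Measure Ω} [IsFiniteMeasure μ]
  [LinearOrder ι] [TopologicalSpace ι] [OrderTopology ι] [FirstCountableTopology ι] [Nonempty ι]
  {ℱ : Filtration ι m} {X : ι → Ω → ℝ} {n : ι}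

theorem uniformIntegrable_stoppedValue {κ : Type*} (hX : Martingale X ℱ μ)
    {τ : κ → Ω → WithTop ι} (hτ : ∀ k, IsStoppingTime ℱ (τ k)) (hτ_le : ∀ k ω, τ k ω ≤ n)
    (hτ_range : ∀ k, (Set.range (τ k)).Countable) :
    UniformIntegrable (fun k => stoppedValue X (τ k)) 1 μ :=
  ((hX.integrable n).uniformIntegrable_condExp
    fun k => (hτ k).measurableSpace_le_of_le (hτ_le k)).ae_eq fun k =>
      (hX.stoppedValue_ae_eq_condExp_of_le_const_of_countable_range (hτ k) (hτ_le k)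
        (hτ_range k)).symm

theorem setIntegral_stoppedValue (hX : Martingale X ℱ μ) {τ : Ω → WithTop ι}
    (hτ : IsStoppingTime ℱ τ) {i : ι} (hiτ : ∀ ω, i ≤ τ ω) (hτ_le : ∀ ω, τ ω ≤ n)
    (hτ_range : (Set.range τ).Countable) {s : Set Ω} (hs : MeasurableSet[ℱ i] s) :
    ∫ ω in s, stoppedValue X τ ω ∂μ = ∫ ω in s, X i ω ∂μ := by
  rcases isEmpty_or_nonempty Ω with hΩ | ⟨⟨ω₀⟩⟩
  · simp [Measure.eq_zero_of_isEmpty μ]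
  have hin : i ≤ n := WithTop.coe_le_coe.1 ((hiτ ω₀).trans (hτ_le ω₀))
  calc ∫ ω in s, stoppedValue X τ ω ∂μ = ∫ ω in s, μ[X n | hτ.measurableSpace] ω ∂μ :=
        setIntegral_congr_ae (ℱ.le i s hs) <| by
          filter_upwards [hX.stoppedValue_ae_eq_condExp_of_le_const_of_countable_range hτ hτ_le
            hτ_range] with ω h _ using h
    _ = ∫ ω in s, X n ω ∂μ := setIntegral_condExp (hτ.measurableSpace_le_of_le hτ_le)
        (hX.integrable n) (hτ.le_measurableSpace_of_const_le hiτ _ hs)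
    _ = ∫ ω in s, X i ω ∂μ := (hX.setIntegral_eq hin hs).symm

end Martingale

section OptionalTime

variable {Ω : Type*} {m : MeasurableSpace Ω} {𝓕 : Filtration ℝ m}

/-- Without right-continuity of the filtration this is weaker than being a stopping time. -/
def IsOptionalTime (𝓕 : Filtration ℝ m) (τ : Ω → ℝ) : Prop :=
  ∀ u, MeasurableSet[𝓕 u] {ω | τ ω < u}

section Hitting

variable {δ : ℝ → Ω → ℝ} {c t T : ℝ}

theorem le_apply_hittingBtwn_Ioi {ω : Ω} (hrc : ∀ x, ContinuousWithinAt (δ · ω) (Ici x) x)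
    (hT : c ≤ δ T ω) : c ≤ δ (hittingBtwn δ (Ioi c) t T ω) ω := by
  set τ := hittingBtwn δ (Ioi c) t T ω
  rcases (hittingBtwn_le ω : τ ≤ T).lt_or_eq with hlt | heq
  · by_contra! hτ
    -- right-continuity keeps `δ < c` on some `[τ, ρ)`, yet `δ` enters `Ioi c` before `min ρ T`
    obtain ⟨ρ, hρ, hsub⟩ := mem_nhdsGE_iff_exists_Ico_subset.1
      ((hrc τ).eventually (eventually_lt_nhds hτ))
    obtain ⟨j, hj, hjc⟩ := (hittingBtwn_lt_iff (min ρ T) (min_le_right _ _)).1 (lt_min hρ hlt)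
    rcases lt_or_ge j τ with hjτ | hτj
    · exact notMem_of_lt_hittingBtwn hjτ hj.1 hjc
    · exact (show δ j ω < c from hsub ⟨hτj, hj.2.trans_le (min_le_left _ _)⟩).not_gt hjc
  · rwa [show τ = T from heq]

theorem isOptionalTime_hittingBtwn_Ioi (hδ : StronglyAdapted 𝓕 δ)
    (hrc : ∀ ω x, ContinuousWithinAt (δ · ω) (Ici x) x) :
    IsOptionalTime 𝓕 (hittingBtwn δ (Ioi c) t T) := by
  intro u
  rcases le_or_gt u T with huT | hTu
  · -- right-continuity lets us look only at rational times
    have hrat : {ω | hittingBtwn δ (Ioi c) t T ω < u}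
        = ⋃ q : ℚ, ⋃ (_ : (q : ℝ) ∈ Ico t u), δ q ⁻¹' Ioi c := by
      ext ω
      simp only [mem_setOf_eq, mem_iUnion, hittingBtwn_lt_iff u huT, mem_preimage]
      constructor
      · rintro ⟨j, hj, hjc⟩
        obtain ⟨ρ, hρ, hsub⟩ := mem_nhdsGE_iff_exists_Ico_subset.1
          ((hrc ω j).eventually (eventually_gt_nhds hjc))
        obtain ⟨q, hjq, hq⟩ := exists_rat_btwn (lt_min hρ hj.2)
        exact ⟨q, ⟨hj.1.trans hjq.le, hq.trans_le (min_le_right _ _)⟩,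
          hsub ⟨hjq.le, hq.trans_le (min_le_left _ _)⟩⟩
      · rintro ⟨q, hq, hqc⟩
        exact ⟨q, hq, hqc⟩
    rw [hrat]
    exact MeasurableSet.iUnion fun q => MeasurableSet.iUnion fun hq =>
      𝓕.mono hq.2.le _ ((hδ q).measurable measurableSet_Ioi)
  · have huniv : {ω | hittingBtwn δ (Ioi c) t T ω < u} = univ :=
      eq_univ_of_forall fun ω => (hittingBtwn_le ω).trans_lt hTu
    rw [huniv]
    exact MeasurableSet.univ

end Hitting

def upperGridApprox (h T : ℝ) (τ : Ω → ℝ) (ω : Ω) : ℝ :=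
  min T (h * (⌊τ ω / h⌋ + 1))

section GridApprox

variable {h T : ℝ} {τ : Ω → ℝ}

theorem upperGridApprox_mem_Icc (hh : 0 < h) {ω : Ω} (hτT : τ ω ≤ T) :
    upperGridApprox h T τ ω ∈ Icc (τ ω) T := by
  refine ⟨le_min hτT ?_, min_le_left _ _⟩
  have := Int.lt_floor_add_one (τ ω / h)
  rw [div_lt_iff₀' hh] at this
  exact this.le

theorem upperGridApprox_le_add (hh : 0 < h) (ω : Ω) : upperGridApprox h T τ ω ≤ τ ω + h := by
  refine (min_le_right _ _).trans ?_
  have := Int.floor_le (τ ω / h)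
  rw [le_div_iff₀' hh] at this
  linarith

theorem tendsto_upperGridApprox {ω : Ω} (hτT : τ ω ≤ T) :
    Tendsto (fun k : ℕ => upperGridApprox (1 / (k + 1)) T τ ω) atTop (𝓝[Icc (τ ω) T] (τ ω)) := by
  refine tendsto_nhdsWithin_iff.2 ⟨tendsto_of_tendsto_of_tendsto_of_le_of_le tendsto_const_nhds
    ?_ (fun k => (upperGridApprox_mem_Icc (by positivity) hτT).1)
    (fun k => upperGridApprox_le_add (by positivity) ω),
    Eventually.of_forall fun k => upperGridApprox_mem_Icc (by positivity) hτT⟩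
  simpa using tendsto_one_div_add_atTop_nhds_zero_nat.const_add (τ ω)

theorem countable_range_upperGridApprox :
    (range fun ω => (upperGridApprox h T τ ω : WithTop ℝ)).Countable :=
  (countable_range fun z : ℤ => ((min T (h * (z + 1)) : ℝ) : WithTop ℝ)).mono <| by
    rintro _ ⟨ω, rfl⟩
    exact ⟨_, rfl⟩

theorem IsOptionalTime.isStoppingTime_upperGridApprox (hτ : IsOptionalTime 𝓕 τ) (hh : 0 < h) :
    IsStoppingTime 𝓕 fun ω => (upperGridApprox h T τ ω : WithTop ℝ) := by
  intro u
  simp only [WithTop.coe_le_coe]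
  rcases le_or_gt T u with hTu | huT
  · have huniv : {ω | upperGridApprox h T τ ω ≤ u} = univ :=
      eq_univ_of_forall fun ω => (min_le_left _ _).trans hTu
    rw [huniv]
    exact MeasurableSet.univ
  · have hgrid : {ω | upperGridApprox h T τ ω ≤ u} = {ω | τ ω < h * ⌊u / h⌋} := by
      ext ω
      rw [mem_setOf_eq, mem_setOf_eq, upperGridApprox, min_le_iff, or_iff_right huT.not_ge,
        ← le_div_iff₀' hh, ← div_lt_iff₀' hh, ← Int.floor_lt, ← Int.cast_one, ← Int.cast_add,
        ← Int.le_floor, Int.add_one_le_iff]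
    rw [hgrid]
    refine 𝓕.mono ?_ _ (hτ _)
    have := Int.floor_le (u / h)
    rw [le_div_iff₀' hh] at this
    exact this

end GridApprox

end OptionalTime

section Comparison

variable {Ω : Type*} {m : MeasurableSpace Ω} {𝓕 : Filtration ℝ m} {P : Measure Ω}
  {X : ℝ → Ω → ℝ}

theorem measure_eq_zero_of_setIntegral_eq_zero_of_pos {f : Ω → ℝ} {s : Set Ω}
    (hs : MeasurableSet s) (hf : IntegrableOn f s P) (hpos : ∀ᵐ ω ∂P, ω ∈ s → 0 < f ω)
    (h0 : ∫ ω in s, f ω ∂P = 0) : P s = 0 := by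
  have hpos' : ∀ᵐ ω ∂P.restrict s, 0 < f ω := (ae_restrict_iff' hs).2 hpos
  have hzero := (setIntegral_eq_zero_iff_of_nonneg_ae (hpos'.mono fun _ h => h.le) hf).1 h0
  have hfalse : ∀ᵐ ω ∂P.restrict s, False := by
    filter_upwards [hpos', hzero] with ω h1 h2
    simp [h2] at h1
  simpa [ae_iff] using hfalse

variable [IsFiniteMeasure P]

theorem Martingale.integrable_and_setIntegral_eq_of_tendsto_stopped (hX : Martingale X 𝓕 P)
    {σ : ℕ → Ω → ℝ} {t T : ℝ} (hσ : ∀ k, IsStoppingTime 𝓕 fun ω => (σ k ω : WithTop ℝ))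
    (hσ_range : ∀ k, (range fun ω => (σ k ω : WithTop ℝ)).Countable)
    (hσ_mem : ∀ k ω, σ k ω ∈ Icc t T) {L : Ω → ℝ}
    (hL : ∀ᵐ ω ∂P, Tendsto (fun k => X (σ k ω) ω) atTop (𝓝 (L ω)))
    {s : Set Ω} (hs : MeasurableSet[𝓕 t] s) :
    Integrable L P ∧ ∫ ω in s, L ω ∂P = ∫ ω in s, X t ω ∂P := by
  have hUI : UniformIntegrable (fun k ω => X (σ k ω) ω) 1 P :=
    hX.uniformIntegrable_stoppedValue hσ (fun k ω => WithTop.coe_le_coe.2 (hσ_mem k ω).2)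
      hσ_range
  refine ⟨hUI.integrable_of_ae_tendsto hL,
    tendsto_nhds_unique (hUI.tendsto_setIntegral_of_ae_tendsto hL s)
      (tendsto_const_nhds.congr fun k => ?_)⟩
  exact (hX.setIntegral_stoppedValue (hσ k) (fun ω => WithTop.coe_le_coe.2 (hσ_mem k ω).1)
    (fun ω => WithTop.coe_le_coe.2 (hσ_mem k ω).2) (hσ_range k) hs).symm

variable {δ D : ℝ → Ω → ℝ} {t T : ℝ}

theorem ae_le_of_decomposition {c : ℝ} (hc : c < 0) (htT : t ≤ T)
    (hX : Martingale X 𝓕 P) (hδ : StronglyAdapted 𝓕 δ)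
    (hδrc : ∀ ω x, ContinuousWithinAt (δ · ω) (Ici x) x)
    (hDrc : ∀ ω, ∀ x ∈ Icc t T, ContinuousWithinAt (D · ω) (Icc x T) x)
    (hDnonneg : ∀ ω, ∀ u ∈ Icc t T, (∀ s ∈ Ico t u, δ s ω < 0) → 0 ≤ D u ω)
    (hdecomp : ∀ᵐ ω ∂P, 0 ≤ δ T ω ∧
      ∀ u ∈ Icc t T, X u ω - X t ω = δ u ω - δ t ω + D u ω) :
    ∀ᵐ ω ∂P, c ≤ δ t ω := by
  set τ := hittingBtwn δ (Ioi c) t T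
  set σ : ℕ → Ω → ℝ := fun k => upperGridApprox (1 / (k + 1)) T τ
  have hτ_mem : ∀ ω, τ ω ∈ Icc t T := hittingBtwn_mem_Icc htT
  have hσ_mem : ∀ k ω, σ k ω ∈ Icc (τ ω) T := fun k ω =>
    upperGridApprox_mem_Icc (by positivity) (hτ_mem ω).2
  have hσ_tendsto : ∀ ω, Tendsto (fun k => σ k ω) atTop (𝓝[Icc (τ ω) T] (τ ω)) := fun ω =>
    tendsto_upperGridApprox (hτ_mem ω).2
  set L : Ω → ℝ := fun ω => δ (τ ω) ω - δ t ω + D (τ ω) ω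
  have hlim : ∀ᵐ ω ∂P, Tendsto (fun k => X (σ k ω) ω) atTop (𝓝 (X t ω + L ω)) := by
    filter_upwards [hdecomp] with ω hω
    have hδlim := ((hδrc ω (τ ω)).mono Icc_subset_Ici_self).tendsto.comp (hσ_tendsto ω)
    have hDlim := (hDrc ω (τ ω) (hτ_mem ω)).tendsto.comp (hσ_tendsto ω)
    refine (((hδlim.sub_const (δ t ω)).add hDlim).const_add (X t ω)).congr fun k => ?_
    have := hω.2 (σ k ω) ⟨(hτ_mem ω).1.trans (hσ_mem k ω).1, (hσ_mem k ω).2⟩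
    simp only [Function.comp]
    linarith
  set B := {ω | δ t ω < c}
  have hB : MeasurableSet[𝓕 t] B := (hδ t).measurable measurableSet_Iio
  have hpos : ∀ᵐ ω ∂P, ω ∈ B → 0 < L ω := by
    filter_upwards [hdecomp] with ω hω hωB
    have hcτ : c ≤ δ (τ ω) ω := le_apply_hittingBtwn_Ioi (hδrc ω) (hc.le.trans hω.1)
    have hDτ : 0 ≤ D (τ ω) ω := hDnonneg ω (τ ω) (hτ_mem ω) fun s hs =>
      (not_lt.1 (notMem_of_lt_hittingBtwn hs.2 hs.1)).trans_lt hc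
    have : δ t ω < c := hωB
    simp only [L]
    linarith
  obtain ⟨hint, hsetint⟩ := hX.integrable_and_setIntegral_eq_of_tendsto_stopped
    (fun k => (isOptionalTime_hittingBtwn_Ioi hδ hδrc).isStoppingTime_upperGridApprox
      (by positivity))
    (fun k => countable_range_upperGridApprox)
    (fun k ω => ⟨(hτ_mem ω).1.trans (hσ_mem k ω).1, (hσ_mem k ω).2⟩) hlim hB
  have hLint : Integrable L P := by
    refine (hint.sub (hX.integrable t)).congr (Eventually.of_forall fun ω => ?_)
    simp
  have hL0 : ∫ ω in B, L ω ∂P = 0 := by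
    rw [integral_add (hX.integrable t).integrableOn hLint.integrableOn] at hsetint
    linarith
  have hPB :=
    measure_eq_zero_of_setIntegral_eq_zero_of_pos (𝓕.le t _ hB) hLint.integrableOn hpos hL0
  filter_upwards [measure_eq_zero_iff_ae_notMem.1 hPB] with ω hω
  exact not_lt.1 hω

theorem ae_nonneg_of_decomposition (htT : t ≤ T)
    (hX : Martingale X 𝓕 P) (hδ : StronglyAdapted 𝓕 δ)
    (hδrc : ∀ ω x, ContinuousWithinAt (δ · ω) (Ici x) x)
    (hDrc : ∀ ω, ∀ x ∈ Icc t T, ContinuousWithinAt (D · ω) (Icc x T) x)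
    (hDnonneg : ∀ ω, ∀ u ∈ Icc t T, (∀ s ∈ Ico t u, δ s ω < 0) → 0 ≤ D u ω)
    (hdecomp : ∀ᵐ ω ∂P, 0 ≤ δ T ω ∧
      ∀ u ∈ Icc t T, X u ω - X t ω = δ u ω - δ t ω + D u ω) :
    ∀ᵐ ω ∂P, 0 ≤ δ t ω := by
  have h := ae_all_iff.2 fun k : ℕ => ae_le_of_decomposition
    (neg_lt_zero.2 (Nat.one_div_pos_of_nat (n := k))) htT hX hδ hδrc hDrc hDnonneg hdecomp
  filter_upwards [h] with ω hω
  simpa using le_of_tendsto' tendsto_one_div_add_atTop_nhds_zero_nat.neg hω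

end Comparison

theorem ae_forall_nonneg_of_rightContinuous {Ω : Type*} {m : MeasurableSpace Ω}
    {P : Measure Ω} {δ : ℝ → Ω → ℝ} {a b : ℝ}
    (hrc : ∀ ω x, ContinuousWithinAt (δ · ω) (Ici x) x)
    (h : ∀ t ∈ Icc a b, ∀ᵐ ω ∂P, 0 ≤ δ t ω) :
    ∀ᵐ ω ∂P, ∀ t ∈ Icc a b, 0 ≤ δ t ω := by
  set S : Set ℝ := Icc a b ∩ insert b (range ((↑) : ℚ → ℝ))
  have hS : ∀ᵐ ω ∂P, ∀ s ∈ S, 0 ≤ δ s ω :=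
    (ae_ball_iff (((countable_range _).insert b).mono inter_subset_right)).2 fun s hs => h s hs.1
  filter_upwards [hS] with ω hω t ht
  rcases ht.2.lt_or_eq with htb | htb
  · have hmem : t ∈ closure (Ioo t b ∩ range ((↑) : ℚ → ℝ)) :=
      closure_minimal (Rat.denseRange_cast.open_subset_closure_inter isOpen_Ioo) isClosed_closure
        (by rw [closure_Ioo htb.ne]; exact left_mem_Icc.2 htb.le)
    have := mem_closure_iff_nhdsWithin_neBot.1 hmem
    refine ge_of_tendsto ((hrc ω t).mono
      (show Ioo t b ∩ range ((↑) : ℚ → ℝ) ⊆ Ici t from fun s hs => hs.1.1.le)).tendsto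
      (eventually_nhdsWithin_of_forall fun s hs => hω s ⟨?_, Or.inr hs.2⟩)
    exact ⟨ht.1.trans hs.1.1.le, hs.1.2.le⟩
  · exact hω t ⟨ht, Or.inl htb⟩

end MeasureTheory

namespace GBSDE

theorem lsMeasure_singleton_of_continuous {A : ℝ → ℝ} (hmono : Monotone A) (hcont : Continuous A)
    (x : ℝ) : lsMeasure A {x} = 0 := by
  have hrc : ∀ y, ContinuousWithinAt A (Ici y) y := fun y => hcont.continuousWithinAt
  rw [lsMeasure, dif_pos ⟨hmono, hrc⟩, StieltjesFunction.measure_singleton]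
  have hleft : Function.leftLim A x = A x :=
    leftLim_eq_of_tendsto ((hcont.tendsto x).mono_left nhdsWithin_le_nhds)
  change ENNReal.ofReal (A x - Function.leftLim A x) = 0
  rw [hleft, sub_self, ENNReal.ofReal_zero]

theorem continuousWithinAt_setIntegral_Ioc {μ : Measure ℝ} {g : ℝ → ℝ} {t T x : ℝ}
    (hx : x ∈ Icc t T) (hμx : μ {x} = 0) (hg : IntegrableOn g (Ioc t T) μ) :
    ContinuousWithinAt (fun u => ∫ s in Ioc t u, g s ∂μ) (Icc x T) x := by
  have htT : t ≤ T := hx.1.trans hx.2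
  have h := intervalIntegral.continuousWithinAt_primitive (f := g) (a := t) (b₁ := t) (b₂ := T) hμx
    (by rwa [min_self, max_eq_right htT, intervalIntegrable_iff_integrableOn_Ioc_of_le htT])
  exact (h.congr (fun u hu => (intervalIntegral.integral_of_le hu.1).symm)
    (intervalIntegral.integral_of_le hx.1).symm).mono (Icc_subset_Icc_left hx.1)

section Solutions

variable {Ω E : Type*} {m0 : MeasurableSpace Ω}
  [NormedAddCommGroup E] [NormedSpace ℝ E] [CompleteSpace E]
  {T : ℝ} {𝓕 : Filtration ℝ m0} {P : Measure Ω} {SC : ItoCalculus E T 𝓕 P} {A : ℝ → Ω → ℝ}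
  {g g₁ g₂ : ℝ → ℝ → Ω → ℝ} {ξ : Ω → ℝ} {Y Y₁ Y₂ : ℝ → Ω → ℝ} {Z Z₁ Z₂ : ℝ → Ω → E}

theorem IsGBSDESolution.ae_terminal (hsol : IsGBSDESolution SC A g ξ Y Z) (hT : 0 ≤ T) :
    ∀ᵐ ω ∂P, Y T ω = ξ ω := by
  filter_upwards [hsol.2.2.2.2.2] with ω h
  simpa using h T ⟨hT, le_rfl⟩

theorem IsGBSDESolution.ae_increment (hsol : IsGBSDESolution SC A g ξ Y Z) :
    ∀ᵐ ω ∂P, ∀ t ∈ Icc 0 T, ∀ u ∈ Icc t T, SC.int Z u ω - SC.int Z t ω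
      = Y u ω - Y t ω + ∫ s in Ioc t u, g s (Y s ω) ω ∂(lsMeasure fun v => A v ω) := by
  filter_upwards [hsol.2.2.2.2.2] with ω h t ht u hu
  have hint := hsol.2.2.2.2.1 ω
  have hsplit : ∫ s in Ioc t T, g s (Y s ω) ω ∂(lsMeasure fun v => A v ω)
      = (∫ s in Ioc t u, g s (Y s ω) ω ∂(lsMeasure fun v => A v ω))
        + ∫ s in Ioc u T, g s (Y s ω) ω ∂(lsMeasure fun v => A v ω) := by
    rw [← setIntegral_union (Ioc_disjoint_Ioc_of_le le_rfl) measurableSet_Ioc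
      (hint.mono_set (Ioc_subset_Ioc ht.1 hu.2))
      (hint.mono_set (Ioc_subset_Ioc (ht.1.trans hu.1) le_rfl)), Ioc_union_Ioc_eq_Ioc hu.1 hu.2]
  linarith [h t ht, h u ⟨ht.1.trans hu.1, hu.2⟩]

theorem IsGBSDESolution.ae_forall_le [IsFiniteMeasure P]
    (hA : ∀ ω x, lsMeasure (fun v => A v ω) {x} = 0)
    (h₁ : IsGBSDESolution SC A g₁ ξ Y₁ Z₁) (h₂ : IsGBSDESolution SC A g₂ ξ Y₂ Z₂)
    (hg : ∀ s ω, Y₂ s ω < Y₁ s ω → g₁ s (Y₁ s ω) ω ≤ g₂ s (Y₂ s ω) ω) :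
    ∀ᵐ ω ∂P, ∀ t ∈ Icc 0 T, Y₁ t ω ≤ Y₂ t ω := by
  obtain ⟨hadp₁, hcad₁, -, hmart₁, hint₁, -⟩ := id h₁
  obtain ⟨hadp₂, hcad₂, -, hmart₂, hint₂, -⟩ := id h₂
  set μ : Ω → Measure ℝ := fun ω => lsMeasure fun v => A v ω
  have hδrc : ∀ ω x, ContinuousWithinAt (fun s => Y₂ s ω - Y₁ s ω) (Ici x) x :=
    fun ω x => ((hcad₂ ω).1 x).sub ((hcad₁ ω).1 x)
  suffices ∀ t ∈ Icc 0 T, ∀ᵐ ω ∂P, 0 ≤ Y₂ t ω - Y₁ t ω by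
    filter_upwards [ae_forall_nonneg_of_rightContinuous hδrc this] with ω hω t ht
    linarith [hω t ht]
  intro t ht
  have hint : ∀ ω, IntegrableOn (fun s => g₂ s (Y₂ s ω) ω - g₁ s (Y₁ s ω) ω) (Ioc t T) (μ ω) :=
    fun ω => ((hint₂ ω).sub (hint₁ ω)).mono_set (Ioc_subset_Ioc ht.1 le_rfl)
  refine ae_nonneg_of_decomposition (X := fun s ω => SC.int Z₂ s ω - SC.int Z₁ s ω)
    (δ := fun s ω => Y₂ s ω - Y₁ s ω)
    (D := fun u ω => ∫ s in Ioc t u, (g₂ s (Y₂ s ω) ω - g₁ s (Y₁ s ω) ω) ∂(μ ω)) ht.2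
    (hmart₂.sub hmart₁) (hadp₂.sub hadp₁) hδrc
    (fun ω x hx => continuousWithinAt_setIntegral_Ioc hx (hA ω x) (hint ω)) ?_ ?_
  · -- the endpoint `u` is `μ`-null, so the sign condition on `[t, u)` suffices
    intro ω u hu hneg
    have hu_null : ∀ᵐ s ∂(μ ω), s ≠ u := by simpa [ae_iff] using hA ω u
    refine setIntegral_nonneg_ae measurableSet_Ioc ?_
    filter_upwards [hu_null] with s hsu hs
    exact sub_nonneg.2 (hg s ω (sub_neg.1 (hneg s ⟨hs.1.le, lt_of_le_of_ne hs.2 hsu⟩)))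
  · filter_upwards [h₁.ae_terminal (ht.1.trans ht.2), h₂.ae_terminal (ht.1.trans ht.2),
      h₁.ae_increment, h₂.ae_increment] with ω hT₁ hT₂ hinc₁ hinc₂
    refine ⟨by rw [hT₁, hT₂, sub_self], fun u hu => ?_⟩
    have hsub : Ioc t u ⊆ Ioc 0 T := Ioc_subset_Ioc ht.1 hu.2
    rw [integral_sub ((hint₂ ω).mono_set hsub) ((hint₁ ω).mono_set hsub)]
    linarith [hinc₁ t ht u hu, hinc₂ t ht u hu]

end Solutions

variable {Ω E : Type*} {m0 : MeasurableSpace Ω}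
  [NormedAddCommGroup E] [NormedSpace ℝ E] [CompleteSpace E]

theorem gbsde_penalized_monotone_general
    (T : ℝ) (𝓕 : Filtration ℝ m0) (P : Measure Ω) [IsProbabilityMeasure P]
    (SC : ItoCalculus E T 𝓕 P)
    (A : ℝ → Ω → ℝ) (hA : IsDriver T 𝓕 P A)
    (ξ : Ω → ℝ)
    (f : ℝ → ℝ → Ω → ℝ)
    (hf_nonneg : ∀ t y ω, 0 ≤ f t y ω)
    (hf_mono : ∀ t ω, Antitone fun y => f t y ω)
    (Y : ℕ → ℝ → Ω → ℝ) (Z : ℕ → ℝ → Ω → E)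
    (hsol : ∀ n : ℕ,
      IsGBSDESolution SC A (fun t y ω => (n : ℝ) * f t y ω) ξ (Y n) (Z n)) :
    ∀ n : ℕ, ∀ᵐ ω ∂P, ∀ t ∈ Set.Icc (0:ℝ) T, Y n t ω ≤ Y (n + 1) t ω := by
  intro n
  refine (hsol n).ae_forall_le (fun ω => lsMeasure_singleton_of_continuous (hA.mono ω) (hA.cont ω))
    (hsol (n + 1)) fun s ω hlt => ?_
  push_cast
  calc (n : ℝ) * f s (Y n s ω) ω ≤ n * f s (Y (n + 1) s ω) ω := by
        gcongr
        exact hf_mono s ω hlt.le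
    _ ≤ (n + 1) * f s (Y (n + 1) s ω) ω := by
        gcongr
        · exact hf_nonneg _ _ _
        · linarith

/-- monotonicity of penalized GBSDE solutions. -/
theorem gbsde_penalized_monotone
    (T : ℝ) (hT : 0 < T) (𝓕 : Filtration ℝ m0) (P : Measure Ω) [IsProbabilityMeasure P]
    (SC : ItoCalculus E T 𝓕 P)
    (A : ℝ → Ω → ℝ) (hA : IsDriver T 𝓕 P A)
    (ξ : Ω → ℝ) (hξmeas : StronglyMeasurable[𝓕 T] ξ) (hξsq : MemLp ξ 2 P)
    (f : ℝ → ℝ → Ω → ℝ)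
    (hf_nonneg : ∀ t y ω, 0 ≤ f t y ω)
    (hf_mono : ∀ t ω, Antitone fun y => f t y ω)
    (Y : ℕ → ℝ → Ω → ℝ) (Z : ℕ → ℝ → Ω → E)
    (hsol : ∀ n : ℕ,
      IsGBSDESolution SC A (fun t y ω => (n : ℝ) * f t y ω) ξ (Y n) (Z n)) :
    ∀ n : ℕ, ∀ᵐ ω ∂P, ∀ t ∈ Set.Icc (0:ℝ) T, Y n t ω ≤ Y (n + 1) t ω :=
  gbsde_penalized_monotone_general T 𝓕 P SC A hA ξ f hf_nonneg hf_mono Y Z hsol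

end GBSDE
end
end

section
/- Dirac-limit lemma for exponential penalization along the right support: Let η be an 𝔽-optional, bounded, right-continuous process and ξ_T an F_T-measurable bounded random variable. Then for any 𝔽-stopping time ν taking values in S̄ = S^r(A)∪{T} almost surely, lim_{n→∞} [ ξ_T · e^{n(A_ν − A_T)} + ∫_{(ν,T]} η_s · n e^{n(A_ν − A_s)} dA_s ] = ξ_T·1_{{ν=T}} + η_ν·1_{{ν<T}} almost surely. -/
/-! If `ν < T`, then `ν` is a point of right increase of the continuous path `A`. Substituting
`x = A_s`, the kernels `n e^{n (A_ν - A_s)} dA_s` on `(ν, T]` have mass `1 - e^{n (A_ν - A_T)} → 1`,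
and they tend to `0` uniformly on `[ν + δ, T]` because `A_{ν+δ} > A_ν`. So they are peak functions
at `ν`, and integrating the bounded right-continuous path `η` against them gives `η_ν`, while the
terminal term vanishes. If `ν = T`, the expression is identically `ξ`. -/

open MeasureTheory Set Filter Function
open scoped ENNReal NNReal Topology

noncomputable section

open Real

namespace StieltjesFunction

variable (f : StieltjesFunction ℝ) {b c : ℝ}

theorem map_restrict_Ioc_of_continuous (hf : Continuous f) (hbc : b ≤ c) :
    (f.measure.restrict (Ioc b c)).map f = volume.restrict (Ioc (f b) (f c)) := by
  have hfm : Measurable f := f.mono.measurable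
  have : IsFiniteMeasure (f.measure.restrict (Ioc b c)) :=
    ⟨by rw [Measure.restrict_apply_univ, f.measure_Ioc]; exact ENNReal.ofReal_lt_top⟩
  refine Measure.ext_of_Iic _ _ fun y => ?_
  rw [Measure.map_apply hfm measurableSet_Iic, Measure.restrict_apply (hfm measurableSet_Iic),
    Measure.restrict_apply measurableSet_Iic, inter_comm (Iic y), Ioc_inter_Iic,
    Real.volume_Ioc, min_comm (f c)]
  rcases lt_or_ge y (f b) with hy | hy
  · have hempty : f ⁻¹' Iic y ∩ Ioc b c = ∅ :=
      eq_empty_of_forall_notMem fun x ⟨hxy, hx⟩ => (hxy.trans_lt hy).not_ge (f.mono hx.1.le)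
    rw [hempty, measure_empty, eq_comm, ENNReal.ofReal_eq_zero]
    linarith [min_le_left y (f c)]
  set S := Icc b c ∩ f ⁻¹' Iic y
  have hS : IsClosed S := isClosed_Icc.inter (isClosed_Iic.preimage hf)
  have hSbdd : BddAbove S := bddAbove_Icc.mono inter_subset_left
  have hSne : S.Nonempty := ⟨b, ⟨le_rfl, hbc⟩, hy⟩
  set s := sSup S
  obtain ⟨⟨-, hsc⟩, hsy⟩ : s ∈ S := hS.csSup_mem hSne hSbdd
  obtain ⟨r, hr, hfr⟩ : ∃ r ∈ Icc b c, f r = min y (f c) :=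
    intermediate_value_Icc hbc hf.continuousOn ⟨le_min hy (f.mono hbc), min_le_right _ _⟩
  have hrs : r ≤ s := le_csSup hSbdd ⟨hr, hfr.trans_le (min_le_left _ _)⟩
  have hfs : f s = min y (f c) :=
    le_antisymm (le_min hsy (f.mono hsc)) (hfr ▸ f.mono hrs)
  have hset : f ⁻¹' Iic y ∩ Ioc b c = Ioc b s := by
    ext x
    exact ⟨fun ⟨hxy, hbx, hxc⟩ => ⟨hbx, le_csSup hSbdd ⟨⟨hbx.le, hxc⟩, hxy⟩⟩,
      fun ⟨hbx, hxs⟩ => ⟨(f.mono hxs).trans hsy, hbx, hxs.trans hsc⟩⟩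
  rw [hset, f.measure_Ioc, hfs]

theorem setIntegral_comp_of_continuous (hf : Continuous f) (hbc : b ≤ c) {g : ℝ → ℝ}
    (hg : AEStronglyMeasurable g (volume.restrict (Ioc (f b) (f c)))) :
    ∫ s in Ioc b c, g (f s) ∂f.measure = ∫ x in Ioc (f b) (f c), g x := by
  rw [← f.map_restrict_Ioc_of_continuous hf hbc] at hg ⊢
  exact (integral_map f.mono.measurable.aemeasurable hg).symm

end StieltjesFunction

theorem integral_Ioc_mul_exp_mul_sub (n : ℝ) {a b : ℝ} (hab : a ≤ b) :
    ∫ x in Ioc a b, n * exp (n * (a - x)) = 1 - exp (n * (a - b)) := by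
  have hderiv : ∀ x ∈ uIcc a b,
      HasDerivAt (fun x => -exp (n * (a - x))) (n * exp (n * (a - x))) x := fun x _ =>
    (((hasDerivAt_id' x).const_sub a).const_mul n).exp.neg.congr_deriv (by ring)
  have hint : IntervalIntegrable (fun x => n * exp (n * (a - x))) volume a b :=
    (by fun_prop : Continuous fun x => n * exp (n * (a - x))).intervalIntegrable a b
  rw [← intervalIntegral.integral_of_le hab,
    intervalIntegral.integral_eq_sub_of_hasDerivAt hderiv hint]
  simp only [sub_self, mul_zero, exp_zero]
  ring

/-- `penaltyKernel A ν n s dA_s = E_{ν,s}(-nA) d(nA)_s`. -/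
def penaltyKernel (f : ℝ → ℝ) (t : ℝ) (n : ℕ) (s : ℝ) : ℝ := n * exp (n * (f t - f s))

theorem penaltyKernel_nonneg (f : ℝ → ℝ) (t : ℝ) (n : ℕ) (s : ℝ) : 0 ≤ penaltyKernel f t n s :=
  mul_nonneg n.cast_nonneg (exp_pos _).le

theorem continuous_penaltyKernel {f : ℝ → ℝ} (hf : Continuous f) (t : ℝ) (n : ℕ) :
    Continuous (penaltyKernel f t n) := by
  unfold penaltyKernel
  fun_prop

theorem penaltyKernel_le {f : ℝ → ℝ} (hf : Monotone f) {t u s : ℝ} (hus : u ≤ s) (n : ℕ) :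
    penaltyKernel f t n s ≤ n * exp (-(n * (f u - f t))) := by
  unfold penaltyKernel
  gcongr
  nlinarith [hf hus, (n.cast_nonneg : (0 : ℝ) ≤ n)]

theorem StieltjesFunction.setIntegral_penaltyKernel (f : StieltjesFunction ℝ) (hf : Continuous f)
    {b c : ℝ} (hbc : b ≤ c) (n : ℕ) :
    ∫ s in Ioc b c, penaltyKernel f b n s ∂f.measure = 1 - exp (n * (f b - f c)) := by
  rw [← integral_Ioc_mul_exp_mul_sub n (f.mono hbc)]
  exact f.setIntegral_comp_of_continuous hf hbc (g := fun x => n * exp (n * (f b - x)))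
    (by fun_prop : Continuous _).aestronglyMeasurable

theorem tendstoUniformlyOn_penaltyKernel {f : ℝ → ℝ} (hf : Monotone f) {t : ℝ}
    (ht : ∀ ε > 0, f t < f (t + ε)) {u : Set ℝ} (hu : u ∈ 𝓝 t) :
    TendstoUniformlyOn (penaltyKernel f t) 0 atTop (Ioi t \ u) := by
  obtain ⟨v, htv, hvu⟩ := exists_Ico_subset_of_mem_nhds hu ⟨t + 1, lt_add_one t⟩
  have hc : 0 < f v - f t := by simpa using sub_pos.2 (ht (v - t) (sub_pos.2 htv))
  have hbound : Tendsto (fun n : ℕ => (n : ℝ) * exp (-(n * (f v - f t)))) atTop (𝓝 0) := by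
    have := (tendsto_rpow_mul_exp_neg_mul_atTop_nhds_zero 1 _ hc).comp tendsto_natCast_atTop_atTop
    refine this.congr fun n => ?_
    simp only [Function.comp_apply, rpow_one]
    ring_nf
  rw [Metric.tendstoUniformlyOn_iff]
  intro ε hε
  filter_upwards [(tendsto_order.1 hbound).2 ε hε] with n hn s ⟨hts, hsu⟩
  have hvs : v ≤ s := not_lt.1 fun hsv => hsu (hvu ⟨le_of_lt hts, hsv⟩)
  rw [Pi.zero_apply, dist_zero_left, Real.norm_of_nonneg (penaltyKernel_nonneg f t n s)]
  exact (penaltyKernel_le hf hvs n).trans_lt hn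

theorem tendsto_exp_natCast_mul_of_neg {c : ℝ} (hc : c < 0) :
    Tendsto (fun n : ℕ => exp (n * c)) atTop (𝓝 0) :=
  tendsto_exp_atBot.comp (tendsto_natCast_atTop_atTop.atTop_mul_const_of_neg hc)

theorem StieltjesFunction.tendsto_setIntegral_mul_penaltyKernel (f : StieltjesFunction ℝ)
    (hf : Continuous f) {t T : ℝ} (htT : t < T) (ht : ∀ ε > 0, f t < f (t + ε)) {g : ℝ → ℝ}
    {a : ℝ} (hg : IntegrableOn g (Ioc t T) f.measure) (hga : Tendsto g (𝓝[>] t) (𝓝 a)) :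
    Tendsto (fun n : ℕ => ∫ s in Ioc t T, g s * penaltyKernel f t n s ∂f.measure)
      atTop (𝓝 a) := by
  have hfT : f t < f T := by simpa using ht (T - t) (sub_pos.2 htT)
  have hmass : Tendsto (fun n : ℕ => ∫ s in Ioc t T, penaltyKernel f t n s ∂f.measure)
      atTop (𝓝 1) := by
    simp_rw [f.setIntegral_penaltyKernel hf htT.le]
    simpa using (tendsto_exp_natCast_mul_of_neg (sub_neg.2 hfT)).const_sub 1
  have hpeak := tendsto_setIntegral_peak_smul_of_integrableOn_of_tendsto measurableSet_Ioc
    measurableSet_Ioc subset_rfl self_mem_nhdsWithin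
    measure_Ioc_lt_top.ne
    (Eventually.of_forall fun n s _ => penaltyKernel_nonneg f t n s)
    (fun u hu htu => (tendstoUniformlyOn_penaltyKernel f.mono ht (hu.mem_nhds htu)).mono
      (diff_subset_diff_left Ioc_subset_Ioi_self))
    hmass (Eventually.of_forall fun n => (continuous_penaltyKernel hf t n).aestronglyMeasurable)
    hg (hga.mono_left (nhdsWithin_mono _ Ioc_subset_Ioi_self))
  simpa only [smul_eq_mul, mul_comm] using hpeak

theorem IsStronglyProgressive.stronglyMeasurable_comp_min {Ω β : Type*} {m : MeasurableSpace Ω}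
    [TopologicalSpace β] {𝓕 : Filtration ℝ m} {u : ℝ → Ω → β}
    (hu : IsStronglyProgressive 𝓕 u) (T : ℝ) (ω : Ω) :
    StronglyMeasurable fun s => u (min s T) ω :=
  (hu T).comp_measurable <|
    ((measurable_id.min measurable_const).subtype_mk (h := fun s => min_le_right s T)).prodMk
      (measurable_const (a := ω))

namespace GBSDE

theorem lsMeasure_stieltjesFunction (f : StieltjesFunction ℝ) : lsMeasure f = f.measure := by
  rw [lsMeasure, dif_pos ⟨f.mono, f.right_continuous⟩]

variable {Ω E : Type*} {m0 : MeasurableSpace Ω}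
  [NormedAddCommGroup E] [NormedSpace ℝ E] [CompleteSpace E]

theorem dirac_limit_right_support_general
    (T : ℝ) (𝓕 : Filtration ℝ m0) (P : Measure Ω)
    (A : ℝ → Ω → ℝ) (hA : IsDriver T 𝓕 P A)
    (η : ℝ → Ω → ℝ) (hη_prog : ProgMeasurable 𝓕 η)
    (Cη : ℝ) (hη_bdd : ∀ t ω, |η t ω| ≤ Cη)
    (hη_rc : ∀ ω x, ContinuousWithinAt (fun t => η t ω) (Set.Ici x) x)
    (ξ : Ω → ℝ)
    (ν : Ω → ℝ) (hν_range : ∀ ω, ν ω ∈ Set.Icc 0 T)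
    (hν_supp : ∀ᵐ ω ∂P, ν ω ∈ rightSupport A ω ∪ {T}) :
    ∀ᵐ ω ∂P,
      Tendsto (fun n : ℕ =>
          ξ ω * Real.exp ((n : ℝ) * (A (ν ω) ω - A T ω))
          + ∫ s in Set.Ioc (ν ω) T,
              η s ω * ((n : ℝ) * Real.exp ((n : ℝ) * (A (ν ω) ω - A s ω)))
              ∂(lsMeasure fun u => A u ω))
        atTop (𝓝 (if ν ω = T then ξ ω else η (ν ω) ω)) := by
  filter_upwards [hν_supp] with ω hω
  let f : StieltjesFunction ℝ :=
    ⟨fun t => A t ω, hA.mono ω, fun _ => (hA.cont ω).continuousWithinAt⟩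
  rw [lsMeasure_stieltjesFunction f]
  rcases (hν_range ω).2.eq_or_lt with hνT | hνT
  · simp [hνT]
  have hsupp : ν ω ∈ rightSupport A ω := hω.resolve_right hνT.ne
  have hfT : f (ν ω) < f T := by simpa using hsupp (T - ν ω) (sub_pos.2 hνT)
  have hη_meas : AEStronglyMeasurable (fun s => η s ω) (f.measure.restrict (Ioc (ν ω) T)) := by
    have hsec := IsStronglyProgressive.stronglyMeasurable_comp_min hη_prog T ω
    refine hsec.aestronglyMeasurable.congr ?_
    filter_upwards [ae_restrict_mem measurableSet_Ioc] with s hs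
    rw [min_eq_left hs.2]
  have hη_int : IntegrableOn (fun s => η s ω) (Ioc (ν ω) T) f.measure :=
    ⟨hη_meas, .restrict_of_bounded (C := Cη) measure_Ioc_lt_top (ae_of_all _ (hη_bdd · ω))⟩
  rw [if_neg hνT.ne]
  have hlim := ((tendsto_exp_natCast_mul_of_neg (sub_neg.2 hfT)).const_mul (ξ ω)).add
    (f.tendsto_setIntegral_mul_penaltyKernel (hA.cont ω) hνT hsupp hη_int
      ((hη_rc ω (ν ω)).mono Ioi_subset_Ici_self))
  rwa [mul_zero, zero_add] at hlim

/-- Dirac-limit lemma for exponential penalization along the right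
support of the driver. -/
theorem dirac_limit_right_support
    (T : ℝ) (hT : 0 < T) (𝓕 : Filtration ℝ m0) (P : Measure Ω) [IsProbabilityMeasure P]
    (A : ℝ → Ω → ℝ) (hA : IsDriver T 𝓕 P A)
    (η : ℝ → Ω → ℝ) (hη_prog : ProgMeasurable 𝓕 η)
    (Cη : ℝ) (hη_bdd : ∀ t ω, |η t ω| ≤ Cη)
    (hη_rc : ∀ ω x, ContinuousWithinAt (fun t => η t ω) (Set.Ici x) x)
    (ξ : Ω → ℝ) (hξmeas : StronglyMeasurable[𝓕 T] ξ)
    (Cξ : ℝ) (hξ_bdd : ∀ ω, |ξ ω| ≤ Cξ)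
    (ν : Ω → ℝ) (hν : IsStoppingTime 𝓕 (fun ω => (ν ω : WithTop ℝ))) (hν_range : ∀ ω, ν ω ∈ Set.Icc 0 T)
    (hν_supp : ∀ᵐ ω ∂P, ν ω ∈ rightSupport A ω ∪ {T}) :
    ∀ᵐ ω ∂P,
      Tendsto (fun n : ℕ =>
          ξ ω * Real.exp ((n : ℝ) * (A (ν ω) ω - A T ω))
          + ∫ s in Set.Ioc (ν ω) T,
              η s ω * ((n : ℝ) * Real.exp ((n : ℝ) * (A (ν ω) ω - A s ω)))
              ∂(lsMeasure fun u => A u ω))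
        atTop (𝓝 (if ν ω = T then ξ ω else η (ν ω) ω)) :=
  dirac_limit_right_support_general T 𝓕 P A hA η hη_prog Cη hη_bdd hη_rc ξ ν hν_range hν_supp

end GBSDE
end
end
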